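/- Let K ⊆ ℝⁿ be a centered convex body (center of mass at the origin) and 1 < R ≤ n. Then there exists a finite Borel measure μ on ℝⁿ with K ⊆ M(μ) ⊆ RK, μ(ℝⁿ) ≤ exp(1 + (n−1)/(R−1)), and ∫ ‖x‖_K dμ(x) ≤ R·exp(1 + (n−1)/(R−1)). In particular d*_R(K) ≤ exp(1+(n−1)/(R−1)) and D*_R(K) ≤ R·exp(1+(n−1)/(R−1)). -/

import Mathlib

open MeasureTheory Pointwise

noncomputable def metronoid {n : ℕ} (μ : Measure (EuclideanSpace ℝ (Fin n))) :
    Set (EuclideanSpace ℝ (Fin n)) :=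
  {y | ∃ f : EuclideanSpace ℝ (Fin n) → ℝ, Measurable f ∧
    (∀ x, f x ∈ Set.Icc (0:ℝ) 1) ∧ (∫ x, f x ∂μ) = 1 ∧ (∫ x, f x • x ∂μ) = y}

/-- `d*_R(K)`. -/
noncomputable def dStar {n : ℕ} (R : ℝ) (K : Set (EuclideanSpace ℝ (Fin n))) : ℝ :=
  sInf {c | ∃ μ : Measure (EuclideanSpace ℝ (Fin n)), IsFiniteMeasure μ ∧
    K ⊆ metronoid μ ∧ metronoid μ ⊆ R • K ∧ (μ Set.univ).toReal = c}

/-- `D*_R(K)`. -/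
noncomputable def DStar {n : ℕ} (R : ℝ) (K : Set (EuclideanSpace ℝ (Fin n))) : ℝ :=
  sInf {c | ∃ μ : Measure (EuclideanSpace ℝ (Fin n)), IsFiniteMeasure μ ∧
    K ⊆ metronoid μ ∧ metronoid μ ⊆ R • K ∧ (∫ x, gauge K x ∂μ) = c}

/-!
Take `μ` uniform on `R • K` with density `1 / vol((R - 1) • K)`. For `y ∈ K` the translate
`y + (R - 1) • K` lies in `R • K` by convexity, has `μ`-mass one and, `K` being centered,
barycenter `y`; its indicator shows `y ∈ M(μ)`. Conversely a point of `M(μ)` is the barycenter of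
a probability measure carried by the compact convex set `R • K`, so it lies there. The total mass
is `(R / (R - 1)) ^ n ≤ exp (1 + (n - 1) / (R - 1))`, and `‖x‖_K ≤ R` on `R • K`.
-/

open scoped ENNReal
open Module

theorem one_add_pow_le_exp {n : ℕ} (hn : 2 ≤ n) {t : ℝ} (ht : -1 < t) :
    (1 + t) ^ n ≤ Real.exp (1 + (n - 1) * t) := by
  have hn' : (2 : ℝ) ≤ n := by exact_mod_cast hn
  have hn1 : (0 : ℝ) < n - 1 := by linarith
  have ht' : 0 < 1 + t := by linarith
  have ha : 0 < (n - 1) / n * (1 + t) := by positivity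
  have hb : 0 < (n : ℝ) / (n - 1) := by positivity
  -- split `1 + t` into factors close to `1` before applying `log x ≤ x - 1` to each
  have hlog : n * Real.log (1 + t) ≤ 1 + (n - 1) * t := calc
    n * Real.log (1 + t) = n * (Real.log ((n - 1) / n * (1 + t)) + Real.log (n / (n - 1))) := by
      rw [← Real.log_mul ha.ne' hb.ne']
      congr 2
      field_simp
    _ ≤ n * (((n - 1) / n * (1 + t) - 1) + (n / (n - 1) - 1)) := by
      gcongr
      · exact Real.log_le_sub_one_of_pos ha
      · exact Real.log_le_sub_one_of_pos hb
    _ = (n - 1) * t + 1 / (n - 1) := by field_simp; ring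
    _ ≤ 1 + (n - 1) * t := by
      have : 1 / ((n : ℝ) - 1) ≤ 1 := by rw [div_le_one hn1]; linarith
      linarith
  calc (1 + t) ^ n = Real.exp (n * Real.log (1 + t)) := by
        rw [← Real.log_pow, Real.exp_log (pow_pos ht' n)]
    _ ≤ _ := Real.exp_le_exp.mpr hlog

section Homothety

variable {E F : Type*} [NormedAddCommGroup E] [NormedSpace ℝ E] [FiniteDimensional ℝ E]
  [MeasurableSpace E] [BorelSpace E] [NormedAddCommGroup F] [NormedSpace ℝ F]
  (μ : Measure E) [μ.IsAddHaarMeasure] {K : Set E}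

theorem setIntegral_image_add_smul (hK : MeasurableSet K) (f : E → F) (y : E) {r : ℝ}
    (hr : r ≠ 0) :
    ∫ x in (fun z ↦ y + r • z) '' K, f x ∂μ = |r| ^ finrank ℝ E • ∫ z in K, f (y + r • z) ∂μ := by
  have hderiv : ∀ z ∈ K, HasFDerivWithinAt (fun z ↦ y + r • z)
      (r • ContinuousLinearMap.id ℝ E) K z :=
    fun z _ ↦ (((hasFDerivAt_id z).const_smul r).const_add y).hasFDerivWithinAt
  have hinj : Set.InjOn (fun z ↦ y + r • z) K :=
    fun a _ b _ h ↦ smul_right_injective E hr (add_left_cancel h)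
  have hdet : |(r • ContinuousLinearMap.id ℝ E).det| = |r| ^ finrank ℝ E := by
    rw [ContinuousLinearMap.det, ContinuousLinearMap.toLinearMap_smul, ContinuousLinearMap.coe_id,
      LinearMap.det_smul, LinearMap.det_id, mul_one, abs_pow]
  rw [integral_image_eq_integral_abs_det_fderiv_smul μ hK hderiv hinj, hdet, integral_smul]

theorem measureReal_image_add_smul (hK : MeasurableSet K) (y : E) {r : ℝ} (hr : r ≠ 0) :
    μ.real ((fun z ↦ y + r • z) '' K) = |r| ^ finrank ℝ E * μ.real K := by
  simpa using setIntegral_image_add_smul μ hK (fun _ ↦ (1 : ℝ)) y hr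

theorem setIntegral_id_image_add_smul (hK : IsCompact K) (hcent : ∫ x in K, x ∂μ = 0) (y : E)
    {r : ℝ} (hr : r ≠ 0) :
    ∫ x in (fun z ↦ y + r • z) '' K, x ∂μ = μ.real ((fun z ↦ y + r • z) '' K) • y := by
  have hint : IntegrableOn (fun z : E ↦ r • z) K μ :=
    (continuous_const_smul r).continuousOn.integrableOn_compact hK
  have : IsFiniteMeasure (μ.restrict K) := isFiniteMeasure_restrict.mpr hK.measure_ne_top
  rw [setIntegral_image_add_smul μ hK.measurableSet _ y hr,
    measureReal_image_add_smul μ hK.measurableSet y hr, integral_add (integrable_const y) hint,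
    integral_smul, hcent, smul_zero, add_zero, setIntegral_const, smul_smul]

theorem addHaar_real_smul_of_nonneg {r : ℝ} (hr : 0 ≤ r) (s : Set E) :
    μ.real (r • s) = r ^ finrank ℝ E * μ.real s := by
  rw [measureReal_def, Measure.addHaar_smul_of_nonneg μ hr, ENNReal.toReal_mul,
    ENNReal.toReal_ofReal (by positivity), measureReal_def]

end Homothety

theorem Convex.image_add_smul_subset_smul {E : Type*} [AddCommGroup E] [Module ℝ E] {K : Set E}
    (hK : Convex ℝ K) {y : E} (hy : y ∈ K) {r : ℝ} (hr : 0 ≤ r) :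
    (fun z ↦ y + r • z) '' K ⊆ (1 + r) • K := by
  rintro _ ⟨z, hz, rfl⟩
  rw [hK.add_smul zero_le_one hr, one_smul]
  exact Set.add_mem_add hy (Set.smul_mem_smul_set hz)

section Metronoid

variable {n : ℕ} {μ : Measure (EuclideanSpace ℝ (Fin n))} {K : Set (EuclideanSpace ℝ (Fin n))}
  {R : ℝ}

theorem setIntegral_id_mem_metronoid {A : Set (EuclideanSpace ℝ (Fin n))} (hA : MeasurableSet A)
    (hμA : μ.real A = 1) : ∫ x in A, x ∂μ ∈ metronoid μ := by
  refine ⟨A.indicator 1, measurable_one.indicator hA, fun x ↦ ?_, ?_, ?_⟩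
  · by_cases hx : x ∈ A <;> simp [hx]
  · rw [integral_indicator_one hA, hμA]
  · rw [← integral_indicator hA]
    congr 1 with x
    by_cases hx : x ∈ A <;> simp [hx]

theorem metronoid_subset_of_ae_mem {L : Set (EuclideanSpace ℝ (Fin n))} (hLconv : Convex ℝ L)
    (hLc : IsCompact L) (hμL : ∀ᵐ x ∂μ, x ∈ L) : metronoid μ ⊆ L := by
  rintro _ ⟨f, hfm, hf01, hfint, rfl⟩
  have hfi : Integrable f μ := Integrable.of_integral_ne_zero (by rw [hfint]; exact one_ne_zero)
  set ν := μ.withDensity fun x ↦ ENNReal.ofReal (f x)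
  have : IsProbabilityMeasure ν := ⟨by
    rw [withDensity_apply _ MeasurableSet.univ, Measure.restrict_univ,
      ← ofReal_integral_eq_lintegral_ofReal hfi (.of_forall fun x ↦ (hf01 x).1), hfint,
      ENNReal.ofReal_one]⟩
  have hνL : ∀ᵐ x ∂ν, x ∈ L := (withDensity_absolutelyContinuous μ _).ae_le hμL
  obtain ⟨C, hC⟩ := hLc.isBounded.exists_norm_le
  have hid : Integrable id ν :=
    (integrable_const C).mono' aestronglyMeasurable_id (by filter_upwards [hνL] using hC)
  have hbar : ∫ x, x ∂ν = ∫ x, f x • x ∂μ := by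
    rw [integral_withDensity_eq_integral_toReal_smul hfm.ennreal_ofReal
      (.of_forall fun _ ↦ ENNReal.ofReal_lt_top)]
    simp_rw [ENNReal.toReal_ofReal (hf01 _).1]
  rw [← hbar]
  exact hLconv.integral_mem hLc.isClosed hνL hid

theorem dStar_le {μ : Measure (EuclideanSpace ℝ (Fin n))} [IsFiniteMeasure μ]
    (hK : K ⊆ metronoid μ) (hRK : metronoid μ ⊆ R • K) : dStar R K ≤ μ.real Set.univ :=
  csInf_le ⟨0, by rintro _ ⟨ν, -, -, -, rfl⟩; exact ENNReal.toReal_nonneg⟩ ⟨μ, ‹_›, hK, hRK, rfl⟩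

theorem DStar_le {μ : Measure (EuclideanSpace ℝ (Fin n))} [IsFiniteMeasure μ]
    (hK : K ⊆ metronoid μ) (hRK : metronoid μ ⊆ R • K) : DStar R K ≤ ∫ x, gauge K x ∂μ :=
  csInf_le ⟨0, by rintro _ ⟨ν, -, -, -, rfl⟩; exact integral_nonneg fun _ ↦ gauge_nonneg _⟩
    ⟨μ, ‹_›, hK, hRK, rfl⟩

end Metronoid

theorem integral_gauge_le {E : Type*} [AddCommGroup E] [Module ℝ E] [MeasurableSpace E]
    {μ : Measure E} [IsFiniteMeasure μ] {K : Set E} {R : ℝ} (hR : 0 ≤ R)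
    (hμ : ∀ᵐ x ∂μ, x ∈ R • K) : ∫ x, gauge K x ∂μ ≤ R * μ.real Set.univ := calc
  ∫ x, gauge K x ∂μ ≤ ∫ _, R ∂μ :=
    integral_mono_of_nonneg (.of_forall fun _ ↦ gauge_nonneg _) (integrable_const R)
      (hμ.mono fun _ hx ↦ gauge_le_of_mem hR hx)
  _ = R * μ.real Set.univ := by rw [integral_const, smul_eq_mul, mul_comm]

-- The density makes each translate `y + (R - 1) • K` have mass one.
theorem subset_metronoid_smul_restrict {n : ℕ} {K : Set (EuclideanSpace ℝ (Fin n))} {R : ℝ}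
    (hKc : IsCompact K) (hKconv : Convex ℝ K)
    (hcent : ∫ x in K, x = 0) (hK0 : volume.real K ≠ 0) (hR : 1 < R) :
    K ⊆ metronoid (ENNReal.ofReal ((R - 1) ^ n * volume.real K)⁻¹ • volume.restrict (R • K)) := by
  intro y hy
  have hR1 : 0 < R - 1 := sub_pos.2 hR
  set d := ((R - 1) ^ n * volume.real K)⁻¹
  set A := (fun z ↦ y + (R - 1) • z) '' K
  have hA : IsCompact A := hKc.image (by fun_prop)
  have hAK : A ⊆ R • K := by
    have := hKconv.image_add_smul_subset_smul hy hR1.le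
    rwa [add_sub_cancel] at this
  have hvolA : volume.real A = (R - 1) ^ n * volume.real K := by
    rw [measureReal_image_add_smul _ hKc.measurableSet y hR1.ne', finrank_euclideanSpace_fin,
      abs_of_pos hR1]
  have hdA : d * volume.real A = 1 := by
    rw [hvolA]
    exact inv_mul_cancel₀ (mul_ne_zero (pow_ne_zero _ hR1.ne') hK0)
  have hrestrict : (ENNReal.ofReal d • volume.restrict (R • K)).restrict A =
      ENNReal.ofReal d • volume.restrict A := by
    rw [Measure.restrict_smul, Measure.restrict_restrict hA.measurableSet,
      Set.inter_eq_left.2 hAK]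
  have hmassA : (ENNReal.ofReal d • volume.restrict (R • K)).real A = 1 := by
    rw [← measureReal_restrict_apply_univ, hrestrict, measureReal_ennreal_smul_apply,
      measureReal_restrict_apply_univ, ENNReal.toReal_ofReal (by positivity), hdA]
  convert setIntegral_id_mem_metronoid hA.measurableSet hmassA
  rw [hrestrict, integral_smul_measure, setIntegral_id_image_add_smul _ hKc hcent y hR1.ne',
    smul_smul, ENNReal.toReal_ofReal (by positivity), hdA, one_smul]

theorem main_upper_bdd {n : ℕ} (K : Set (EuclideanSpace ℝ (Fin n)))
    (hKc : IsCompact K) (hKconv : Convex ℝ K) (hKint : (interior K).Nonempty)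
    (hcent : ∫ x in K, x ∂(volume : Measure (EuclideanSpace ℝ (Fin n))) = 0)
    (R : ℝ) (hR1 : 1 < R) (hRn : R ≤ n) :
    (∃ μ : Measure (EuclideanSpace ℝ (Fin n)), IsFiniteMeasure μ ∧
      K ⊆ metronoid μ ∧ metronoid μ ⊆ R • K ∧
      (μ Set.univ).toReal ≤ Real.exp (1 + (n - 1) / (R - 1)) ∧
      (∫ x, gauge K x ∂μ) ≤ R * Real.exp (1 + (n - 1) / (R - 1))) ∧
    dStar R K ≤ Real.exp (1 + (n - 1) / (R - 1)) ∧
    DStar R K ≤ R * Real.exp (1 + (n - 1) / (R - 1)) := by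
  have hn : 2 ≤ n := by exact_mod_cast (hR1.trans_le hRn : (1 : ℝ) < n)
  have hR0 : 0 < R := one_pos.trans hR1
  have hR1' : 0 < R - 1 := sub_pos.2 hR1
  have hK0 : 0 < volume.real K :=
    ENNReal.toReal_pos (Measure.measure_pos_of_nonempty_interior _ hKint).ne' hKc.measure_ne_top
  have hRK : IsCompact (R • K) := hKc.smul R
  set μ := ENNReal.ofReal ((R - 1) ^ n * volume.real K)⁻¹ • volume.restrict (R • K)
  have hμ : IsFiniteMeasure μ :=
    ⟨ENNReal.mul_lt_top ENNReal.ofReal_lt_top (by simpa using hRK.measure_lt_top (μ := volume))⟩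
  have hμRK_ae : ∀ᵐ x ∂μ, x ∈ R • K :=
    Measure.ae_smul_measure (ae_restrict_mem hRK.measurableSet) _
  have hmass : μ.real Set.univ = (R / (R - 1)) ^ n := by
    rw [measureReal_ennreal_smul_apply, measureReal_restrict_apply_univ,
      addHaar_real_smul_of_nonneg _ hR0.le, ENNReal.toReal_ofReal (by positivity),
      finrank_euclideanSpace_fin, div_pow]
    field_simp
  have hexp : (R / (R - 1)) ^ n ≤ Real.exp (1 + (n - 1) / (R - 1)) := by
    have h := one_add_pow_le_exp hn (t := 1 / (R - 1)) (neg_one_lt_zero.trans (by positivity))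
    rwa [one_add_div hR1'.ne', sub_add_cancel, mul_one_div] at h
  have hμK : K ⊆ metronoid μ := subset_metronoid_smul_restrict hKc hKconv hcent hK0.ne' hR1
  have hμRK : metronoid μ ⊆ R • K := metronoid_subset_of_ae_mem (hKconv.smul R) hRK hμRK_ae
  have hgauge : ∫ x, gauge K x ∂μ ≤ R * Real.exp (1 + (n - 1) / (R - 1)) :=
    (integral_gauge_le hR0.le hμRK_ae).trans (by rw [hmass]; gcongr)
  exact ⟨⟨μ, hμ, hμK, hμRK, hmass.trans_le hexp, hgauge⟩,
    (dStar_le hμK hμRK).trans (hmass.trans_le hexp), (DStar_le hμK hμRK).trans hgauge⟩
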